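/- Let s, l be positive integers and let A, B ∈ M_{s×l}(ℤ) be matrices all of whose rows sum to 0, both in homogeneous Smith normal form. If there exist Q ∈ GL_s(ℤ) and P ∈ GL_l(ℤ) with P·𝟙 = 𝟙 such that B = Q·A·P⁻¹, then A = B. (Uniqueness of the homogeneous Smith normal form in each orbit of GL_s(ℤ)×GL_l^h(ℤ).) -/

import Mathlib

open Matrix

/-- A matrix `A ∈ M_{s×l}(ℤ)` is in Smith normal form: it is diagonal, and there is `r`
such that the first `r` diagonal entries are positive, the remaining ones vanish, and
consecutive diagonal entries divide each other. -/
def IsSNF {s l : ℕ} (A : Matrix (Fin s) (Fin l) ℤ) : Prop :=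
  (∀ (i : Fin s) (j : Fin l), (i : ℕ) ≠ (j : ℕ) → A i j = 0) ∧
  ∃ r : ℕ,
    (∀ (i : Fin s) (j : Fin l), (i : ℕ) = (j : ℕ) →
      ((i : ℕ) < r → 0 < A i j) ∧ (r ≤ (i : ℕ) → A i j = 0)) ∧
    (∀ (i i' : Fin s) (j j' : Fin l), (i : ℕ) = (j : ℕ) → (i' : ℕ) = (j' : ℕ) →
      (i : ℕ) + 1 = (i' : ℕ) → A i j ∣ A i' j')

/-- The matrix obtained from `A` by erasing its first column. -/
def eraseFirstCol {s l : ℕ} (A : Matrix (Fin s) (Fin l) ℤ) :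
    Matrix (Fin s) (Fin (l - 1)) ℤ :=
  Matrix.of fun i j => A i ⟨(j : ℕ) + 1, by have := j.isLt; omega⟩

/-- A matrix `A` with `A·𝟙 = 0` is in homogeneous Smith normal form if the matrix obtained
from `A` by erasing its first column is in Smith normal form. -/
def IsHSNF {s l : ℕ} (A : Matrix (Fin s) (Fin l) ℤ) : Prop :=
  A *ᵥ 1 = 0 ∧ IsSNF (eraseFirstCol A)

/-!
The column lattice `L = A ℤˡ ⊆ ℤˢ` of `A` only changes by the automorphism `Q` of `ℤˢ` under the
action, because `P` is invertible. Since the rows of `A` sum to zero, the first column of `A` is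
minus the sum of the others, so `L` is also the column lattice of the matrix `A'` obtained by
erasing it, which is in Smith normal form with diagonal `d₁ ∣ d₂ ∣ ⋯`. Then `L = ⊕ dᵢℤ`, and for
every `n > 0` the order `∏ᵢ gcd(n, dᵢ)` of `ℤˢ / (L + nℤˢ)` is an invariant of `L` up to
automorphisms. A divisibility chain is determined by these products, by induction on its length:
the last entry is `0` exactly when the products are unbounded in `n`, and otherwise the maximum
of the products is `∏ᵢ dᵢ`, attained exactly at the multiples of the last entry. So `A' = B'`,
and then the first columns agree as well.
-/

open Finset Submodule

namespace Nat

variable {a b : ℕ → ℕ} {s : ℕ}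

theorem eq_of_le_of_prod_eq {ι : Type*} {t : Finset ι} {f g : ι → ℕ}
    (hf : ∀ i ∈ t, 0 < f i) (hfg : ∀ i ∈ t, f i ≤ g i) (h : ∏ i ∈ t, f i = ∏ i ∈ t, g i) :
    ∀ i ∈ t, f i = g i := by
  by_contra! ⟨i, hi, hne⟩
  exact h.not_lt (prod_lt_prod hf hfg ⟨i, hi, (hfg i hi).lt_of_ne hne⟩)

theorem eq_zero_of_prod_gcd_eq (hb : ∀ k ≤ s, b k ∣ b s) (ha : a s = 0)
    (hF : ∀ n, 0 < n →
      ∏ k ∈ range (s + 1), n.gcd (a k) = ∏ k ∈ range (s + 1), n.gcd (b k)) :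
    b s = 0 := by
  by_contra hbs
  set N := ∏ k ∈ range (s + 1), b k
  have hlow : N + 1 ≤ ∏ k ∈ range (s + 1), (N + 1).gcd (a k) := by
    calc N + 1 = (N + 1).gcd (a s) := by rw [ha, Nat.gcd_zero_right]
      _ ≤ _ := single_le_prod' (f := fun k => (N + 1).gcd (a k))
          (fun k _ => Nat.gcd_pos_of_pos_left _ N.succ_pos) (self_mem_range_succ s)
  have hup : ∏ k ∈ range (s + 1), (N + 1).gcd (b k) ≤ N := by
    refine prod_le_prod' fun k hk => Nat.gcd_le_right _ (Nat.pos_of_ne_zero ?_)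
    exact ne_zero_of_dvd_ne_zero hbs (hb k (mem_range_succ_iff.mp hk))
  have := hF (N + 1) N.succ_pos
  omega

theorem prod_le_prod_of_prod_gcd_eq (ha : ∀ k ≤ s, a k ∣ a s) (has : a s ≠ 0)
    (hb : ∀ k ≤ s, b k ≠ 0)
    (hF : ∀ n, 0 < n →
      ∏ k ∈ range (s + 1), n.gcd (a k) = ∏ k ∈ range (s + 1), n.gcd (b k)) :
    ∏ k ∈ range (s + 1), a k ≤ ∏ k ∈ range (s + 1), b k :=
  calc ∏ k ∈ range (s + 1), a k = ∏ k ∈ range (s + 1), (a s).gcd (a k) :=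
        prod_congr rfl fun k hk => (Nat.gcd_eq_right (ha k (mem_range_succ_iff.mp hk))).symm
    _ = ∏ k ∈ range (s + 1), (a s).gcd (b k) := hF _ (Nat.pos_of_ne_zero has)
    _ ≤ ∏ k ∈ range (s + 1), b k :=
        prod_le_prod' fun k hk =>
          Nat.gcd_le_right _ (Nat.pos_of_ne_zero (hb k (mem_range_succ_iff.mp hk)))

theorem dvd_of_prod_gcd_eq (ha : ∀ k ≤ s, a k ∣ a s) (hb : ∀ k ≤ s, b k ∣ b s)
    (has : a s ≠ 0) (hbs : b s ≠ 0)
    (hF : ∀ n, 0 < n →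
      ∏ k ∈ range (s + 1), n.gcd (a k) = ∏ k ∈ range (s + 1), n.gcd (b k)) :
    b s ∣ a s := by
  have ha0 : ∀ k ≤ s, a k ≠ 0 := fun k hk => ne_zero_of_dvd_ne_zero has (ha k hk)
  have hb0 : ∀ k ≤ s, b k ≠ 0 := fun k hk => ne_zero_of_dvd_ne_zero hbs (hb k hk)
  have hprod : ∏ k ∈ range (s + 1), (a s).gcd (b k) = ∏ k ∈ range (s + 1), b k := by
    refine le_antisymm (prod_le_prod' fun k hk => Nat.gcd_le_right _ ?_) ?_
    · exact Nat.pos_of_ne_zero (hb0 k (mem_range_succ_iff.mp hk))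
    calc ∏ k ∈ range (s + 1), b k ≤ ∏ k ∈ range (s + 1), a k :=
          prod_le_prod_of_prod_gcd_eq hb hbs ha0 fun n hn => (hF n hn).symm
      _ = ∏ k ∈ range (s + 1), (a s).gcd (a k) :=
          prod_congr rfl fun k hk => (Nat.gcd_eq_right (ha k (mem_range_succ_iff.mp hk))).symm
      _ = _ := hF _ (Nat.pos_of_ne_zero has)
  refine Nat.gcd_eq_right_iff_dvd.mp (eq_of_le_of_prod_eq ?_ ?_ hprod s (self_mem_range_succ s))
  · exact fun k _ => Nat.gcd_pos_of_pos_left _ (Nat.pos_of_ne_zero has)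
  · exact fun k hk => Nat.gcd_le_right _ (Nat.pos_of_ne_zero (hb0 k (mem_range_succ_iff.mp hk)))

theorem eq_of_prod_gcd_eq_of_forall_dvd (ha : ∀ k ≤ s, a k ∣ a s) (hb : ∀ k ≤ s, b k ∣ b s)
    (hF : ∀ n, 0 < n →
      ∏ k ∈ range (s + 1), n.gcd (a k) = ∏ k ∈ range (s + 1), n.gcd (b k)) :
    a s = b s := by
  have hF' : ∀ n, 0 < n →
      ∏ k ∈ range (s + 1), n.gcd (b k) = ∏ k ∈ range (s + 1), n.gcd (a k) :=
    fun n hn => (hF n hn).symm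
  by_cases has : a s = 0
  · rw [has, eq_zero_of_prod_gcd_eq hb has hF]
  by_cases hbs : b s = 0
  · rw [hbs, eq_zero_of_prod_gcd_eq ha hbs hF']
  exact Nat.dvd_antisymm (dvd_of_prod_gcd_eq hb ha hbs has hF')
    (dvd_of_prod_gcd_eq ha hb has hbs hF)

theorem eq_of_prod_gcd_eq (ha : ∀ k, a k ∣ a (k + 1)) (hb : ∀ k, b k ∣ b (k + 1)) :
    ∀ s, (∀ n, 0 < n → ∏ k ∈ range s, n.gcd (a k) = ∏ k ∈ range s, n.gcd (b k)) →
      ∀ k < s, a k = b k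
  | 0, _ => by simp
  | s + 1, hF => by
    have hlast : a s = b s := eq_of_prod_gcd_eq_of_forall_dvd
      (fun k hk => Nat.rel_of_forall_rel_succ_of_le _ ha hk)
      (fun k hk => Nat.rel_of_forall_rel_succ_of_le _ hb hk) hF
    have hinit := eq_of_prod_gcd_eq ha hb s fun n hn => by
      have h := hF n hn
      rw [prod_range_succ, prod_range_succ, hlast] at h
      exact Nat.eq_of_mul_eq_mul_right (Nat.gcd_pos_of_pos_left _ hn) h
    intro k hk
    rcases Nat.lt_succ_iff_lt_or_eq.mp hk with hk | rfl
    exacts [hinit k hk, hlast]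

end Nat

section Lattices

theorem Submodule.pi_univ_sup_pi_univ {ι R : Type*} [Semiring R] [Finite ι] [DecidableEq ι]
    {φ : ι → Type*} [∀ i, AddCommMonoid (φ i)] [∀ i, Module R (φ i)]
    (p q : ∀ i, Submodule R (φ i)) :
    pi Set.univ p ⊔ pi Set.univ q = pi Set.univ (p ⊔ q) := by
  simp_rw [← iSup_map_single, ← iSup_sup_eq, ← Submodule.map_sup]
  rfl

theorem Ideal.smul_top_eq_pi_univ {ι R : Type*} [CommRing R] [Finite ι] [DecidableEq ι]
    (I : Ideal R) : I • (⊤ : Submodule R (ι → R)) = Submodule.pi Set.univ fun _ => I := by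
  rw [← iSup_map_single, ← pi_top Set.univ, ← iSup_map_single, smul_iSup]
  congr! with i
  rw [← map_smul'', smul_eq_mul, Ideal.mul_top]

theorem Int.span_natCast_sup_span_natCast (a b : ℕ) :
    Ideal.span {(a : ℤ)} ⊔ Ideal.span {(b : ℤ)} = Ideal.span {(a.gcd b : ℤ)} := by
  rw [← Ideal.span_insert, ← _root_.span_gcd, ← Int.coe_gcd, Int.gcd_natCast_natCast]

theorem Int.card_quotient_pi_span {ι : Type*} [Fintype ι] [DecidableEq ι] (c : ι → ℕ) :
    Nat.card ((ι → ℤ) ⧸ pi Set.univ fun i => Ideal.span {(c i : ℤ)}) = ∏ i, c i := by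
  rw [Nat.card_congr (quotientPi _).toEquiv, Nat.card_pi]
  exact prod_congr rfl fun i _ => by
    rw [Nat.card_congr (Int.quotientSpanNatEquivZMod (c i)).toEquiv, Nat.card_zmod]

theorem Int.card_quotient_pi_span_sup_smul_top {ι : Type*} [Fintype ι] [DecidableEq ι]
    (c : ι → ℕ) (n : ℕ) :
    Nat.card ((ι → ℤ) ⧸ (pi Set.univ fun i => Ideal.span {(c i : ℤ)}) ⊔
      Ideal.span {(n : ℤ)} • ⊤) = ∏ i, n.gcd (c i) := by
  rw [Ideal.smul_top_eq_pi_univ, pi_univ_sup_pi_univ, ← card_quotient_pi_span]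
  congr! with i
  rw [Pi.sup_apply, sup_comm, span_natCast_sup_span_natCast]

theorem Submodule.card_quotient_map_sup_smul_top {R M : Type*} [CommRing R] [AddCommGroup M]
    [Module R M] (e : M ≃ₗ[R] M) (L : Submodule R M) (I : Ideal R) :
    Nat.card (M ⧸ L.map (e : M →ₗ[R] M) ⊔ I • ⊤) = Nat.card (M ⧸ L ⊔ I • ⊤) :=
  (Nat.card_congr (Quotient.equiv _ _ e <| by
    rw [Submodule.map_sup, map_smul'', map_top, LinearEquiv.range]).toEquiv).symm

theorem Int.prod_gcd_eq_of_map_pi_span_eq {ι : Type*} [Fintype ι] [DecidableEq ι]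
    (c d : ι → ℕ) (e : (ι → ℤ) ≃ₗ[ℤ] (ι → ℤ))
    (h : (pi Set.univ fun i => Ideal.span {(c i : ℤ)}).map (e : (ι → ℤ) →ₗ[ℤ] (ι → ℤ)) =
      pi Set.univ fun i => Ideal.span {(d i : ℤ)})
    (n : ℕ) : ∏ i, n.gcd (c i) = ∏ i, n.gcd (d i) := by
  rw [← card_quotient_pi_span_sup_smul_top, ← card_quotient_pi_span_sup_smul_top, ← h,
    card_quotient_map_sup_smul_top]

end Lattices

section DiagonalMatrices

variable {R : Type*} [CommRing R] {s m : ℕ}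

def diagEntry (A : Matrix (Fin s) (Fin m) R) (k : ℕ) : R :=
  if h : k < s ∧ k < m then A ⟨k, h.1⟩ ⟨k, h.2⟩ else 0

theorem apply_eq_diagEntry (A : Matrix (Fin s) (Fin m) R) {i : Fin s} {j : Fin m}
    (hij : (i : ℕ) = j) : A i j = diagEntry A i := by
  obtain ⟨i, hi⟩ := i
  obtain ⟨j, hj⟩ := j
  subst hij
  simp [diagEntry, hi, hj]

theorem mulVec_apply_of_offDiag_eq_zero {A : Matrix (Fin s) (Fin m) R}
    (hA : ∀ (i : Fin s) (j : Fin m), (i : ℕ) ≠ j → A i j = 0) (y : Fin m → R) (i : Fin s) :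
    (A *ᵥ y) i = diagEntry A i * if h : (i : ℕ) < m then y ⟨i, h⟩ else 0 := by
  rw [mulVec, dotProduct]
  split_ifs with h
  · rw [sum_eq_single ⟨i, h⟩ (fun j _ hj => by rw [hA i j (fun hij => hj (Fin.ext hij.symm)),
      zero_mul]) (by simp), apply_eq_diagEntry A rfl]
  · rw [mul_zero]
    exact sum_eq_zero fun j _ => by rw [hA i j (fun hij => h (hij ▸ j.isLt)), zero_mul]

theorem range_mulVecLin_of_offDiag_eq_zero {A : Matrix (Fin s) (Fin m) R}
    (hA : ∀ (i : Fin s) (j : Fin m), (i : ℕ) ≠ j → A i j = 0) :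
    LinearMap.range A.mulVecLin = pi Set.univ fun i : Fin s => Ideal.span {diagEntry A i} := by
  apply le_antisymm
  · rintro _ ⟨y, rfl⟩ i -
    rw [mulVecLin_apply, mulVec_apply_of_offDiag_eq_zero hA]
    exact Ideal.mul_mem_right _ _ (Ideal.mem_span_singleton_self _)
  · intro v hv
    choose c hc using fun i => Ideal.mem_span_singleton'.mp (hv i trivial)
    refine ⟨fun j => if h : (j : ℕ) < s then c ⟨j, h⟩ else 0, funext fun i => ?_⟩
    rw [mulVecLin_apply, mulVec_apply_of_offDiag_eq_zero hA, ← hc, mul_comm]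
    by_cases h : (i : ℕ) < m
    · simp [h]
    · simp [h, diagEntry]

end DiagonalMatrices

namespace IsSNF

variable {s m : ℕ} {A B : Matrix (Fin s) (Fin m) ℤ}

theorem diagEntry_nonneg (hA : IsSNF A) (k : ℕ) : 0 ≤ diagEntry A k := by
  obtain ⟨-, r, hr, -⟩ := hA
  unfold diagEntry
  split_ifs with h
  · obtain ⟨hpos, hzero⟩ := hr ⟨k, h.1⟩ ⟨k, h.2⟩ rfl
    rcases lt_or_ge k r with hk | hk
    exacts [(hpos hk).le, (hzero hk).ge]
  · exact le_rfl

theorem diagEntry_dvd_succ (hA : IsSNF A) (k : ℕ) : diagEntry A k ∣ diagEntry A (k + 1) := by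
  obtain ⟨-, -, -, hdvd⟩ := hA
  by_cases h : k + 1 < s ∧ k + 1 < m
  · rw [diagEntry, diagEntry, dif_pos h, dif_pos ⟨by omega, by omega⟩]
    exact hdvd _ _ _ _ rfl rfl rfl
  · rw [show diagEntry A (k + 1) = 0 from dif_neg h]
    exact dvd_zero _

theorem range_mulVecLin (hA : IsSNF A) :
    LinearMap.range A.mulVecLin =
      pi Set.univ fun i : Fin s => Ideal.span {((diagEntry A i).natAbs : ℤ)} := by
  simp_rw [Int.span_natAbs]
  exact range_mulVecLin_of_offDiag_eq_zero hA.1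

theorem eq_of_map_range_eq (hA : IsSNF A) (hB : IsSNF B) (e : (Fin s → ℤ) ≃ₗ[ℤ] (Fin s → ℤ))
    (h : (LinearMap.range A.mulVecLin).map (e : (Fin s → ℤ) →ₗ[ℤ] (Fin s → ℤ)) =
      LinearMap.range B.mulVecLin) :
    A = B := by
  have hF := Int.prod_gcd_eq_of_map_pi_span_eq (fun i : Fin s => (diagEntry A i).natAbs)
    (fun i => (diagEntry B i).natAbs) e (by rw [← hA.range_mulVecLin, ← hB.range_mulVecLin, h])
  have hdiag : ∀ k < s, (diagEntry A k).natAbs = (diagEntry B k).natAbs :=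
    Nat.eq_of_prod_gcd_eq (fun k => Int.natAbs_dvd_natAbs.mpr (hA.diagEntry_dvd_succ k))
      (fun k => Int.natAbs_dvd_natAbs.mpr (hB.diagEntry_dvd_succ k)) s fun n _ => by
        rw [← Fin.prod_univ_eq_prod_range (fun k => n.gcd (diagEntry A k).natAbs),
          ← Fin.prod_univ_eq_prod_range (fun k => n.gcd (diagEntry B k).natAbs)]
        exact hF n
  ext i j
  by_cases hij : (i : ℕ) = j
  · rw [apply_eq_diagEntry A hij, apply_eq_diagEntry B hij]
    exact (Int.natAbs_inj_of_nonneg_of_nonneg (hA.diagEntry_nonneg i)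
      (hB.diagEntry_nonneg i)).mp (hdiag i i.isLt)
  · rw [hA.1 i j hij, hB.1 i j hij]

end IsSNF

section ColumnLattice

variable {R : Type*} [CommRing R] {ι : Type*} {m : ℕ}

theorem eraseFirstCol_eq_submatrix {s : ℕ} (A : Matrix (Fin s) (Fin (m + 1)) ℤ) :
    eraseFirstCol A = A.submatrix id Fin.succ :=
  rfl

theorem range_mulVecLin_submatrix_succ {A : Matrix ι (Fin (m + 1)) R} (hA : A *ᵥ 1 = 0) :
    LinearMap.range (A.submatrix id Fin.succ).mulVecLin = LinearMap.range A.mulVecLin := by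
  apply le_antisymm
  · rintro _ ⟨y, rfl⟩
    exact ⟨Fin.cons 0 y, funext fun i => by simp [mulVec, dotProduct, Fin.sum_univ_succ]⟩
  · rintro _ ⟨x, rfl⟩
    refine ⟨fun j => x j.succ - x 0, ?_⟩
    have hx : A *ᵥ x = A *ᵥ (x - x 0 • 1) := by
      rw [mulVec_sub, mulVec_smul, hA, smul_zero, sub_zero]
    rw [mulVecLin_apply, mulVecLin_apply, hx]
    funext i
    simp [mulVec, dotProduct, Fin.sum_univ_succ]

theorem eq_of_submatrix_succ_eq {A B : Matrix ι (Fin (m + 1)) R} (hA : A *ᵥ 1 = 0)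
    (hB : B *ᵥ 1 = 0) (h : A.submatrix id Fin.succ = B.submatrix id Fin.succ) : A = B := by
  ext i j
  refine Fin.cases ?_ (fun j => congrFun₂ h i j) j
  have hrows : ∑ j : Fin m, A i j.succ = ∑ j : Fin m, B i j.succ :=
    sum_congr rfl fun j _ => congrFun₂ h i j
  have hAi := congrFun hA i
  have hBi := congrFun hB i
  simp only [mulVec, dotProduct, Pi.one_apply, mul_one, Fin.sum_univ_succ, Pi.zero_apply]
    at hAi hBi
  linear_combination hAi - hBi - hrows

theorem range_mulVecLin_units_mul_mul [Fintype ι] [DecidableEq ι] {κ : Type*} [Fintype κ]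
    [DecidableEq κ] (Q : GL ι R) (A : Matrix ι κ R) (P : GL κ R) :
    LinearMap.range ((Q : Matrix ι ι R) * A * (P : Matrix κ κ R)).mulVecLin =
      (LinearMap.range A.mulVecLin).map
        ((GeneralLinearGroup.toLin Q).toLinearEquiv : (ι → R) →ₗ[R] (ι → R)) := by
  have hP : LinearMap.range (P : Matrix κ κ R).mulVecLin = ⊤ :=
    (GeneralLinearGroup.toLin P).toLinearEquiv.range
  rw [mulVecLin_mul, mulVecLin_mul, LinearMap.range_comp_of_range_eq_top _ hP,
    LinearMap.range_comp]
  rfl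

end ColumnLattice

theorem hsnf_unique_general (s l : ℕ) (hl : 0 < l)
    (A B : Matrix (Fin s) (Fin l) ℤ)
    (hA : IsHSNF A) (hB : IsHSNF B)
    (h : ∃ (Q : Matrix.GeneralLinearGroup (Fin s) ℤ)
          (P : Matrix.GeneralLinearGroup (Fin l) ℤ),
        (P : Matrix (Fin l) (Fin l) ℤ) *ᵥ 1 = 1 ∧
        B = (Q : Matrix (Fin s) (Fin s) ℤ) * A *
          ((P⁻¹ : Matrix.GeneralLinearGroup (Fin l) ℤ) : Matrix (Fin l) (Fin l) ℤ)) :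
    A = B := by
  obtain ⟨Q, P, -, rfl⟩ := h
  obtain ⟨m, rfl⟩ : ∃ m, l = m + 1 := ⟨l - 1, by omega⟩
  obtain ⟨hA1, hA'⟩ := hA
  obtain ⟨hB1, hB'⟩ := hB
  rw [eraseFirstCol_eq_submatrix] at hA' hB'
  refine eq_of_submatrix_succ_eq hA1 hB1
    (hA'.eq_of_map_range_eq hB' (GeneralLinearGroup.toLin Q).toLinearEquiv ?_)
  rw [range_mulVecLin_submatrix_succ hA1, range_mulVecLin_submatrix_succ hB1,
    range_mulVecLin_units_mul_mul]

/-- Uniqueness of the homogeneous Smith normal form in each orbit of the action of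
`GL_s(ℤ) × GL_l^h(ℤ)` on matrices all of whose rows sum to zero. -/
theorem hsnf_unique (s l : ℕ) (hs : 0 < s) (hl : 0 < l)
    (A B : Matrix (Fin s) (Fin l) ℤ) (hA1 : A *ᵥ 1 = 0) (hB1 : B *ᵥ 1 = 0)
    (hA : IsHSNF A) (hB : IsHSNF B)
    (h : ∃ (Q : Matrix.GeneralLinearGroup (Fin s) ℤ)
          (P : Matrix.GeneralLinearGroup (Fin l) ℤ),
        (P : Matrix (Fin l) (Fin l) ℤ) *ᵥ 1 = 1 ∧
        B = (Q : Matrix (Fin s) (Fin s) ℤ) * A *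
          ((P⁻¹ : Matrix.GeneralLinearGroup (Fin l) ℤ) : Matrix (Fin l) (Fin l) ℤ)) :
    A = B :=
  hsnf_unique_general s l hl A B hA hB h
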